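/- Assume γ̲ := inf{γ₁(x₁,x₂) : x₁ ≥ 1, x₂ ≥ 0} > 0 and that λ₁ is bounded by a constant K. For each N ≥ 1, let (X₁ᴺ, X₂ᴺ) be an ℕ²-valued càdlàg adapted process satisfying the martingale property for B_N with the function f(x₁,x₂) = x₁, with E[X₁ᴺ(0)] < ∞. Then for every T > 0: N · E[∫₀ᵀ 1_{X₁ᴺ(s) ≥ 1} ds] ≤ (E[X₁ᴺ(0)] + K T)/γ̲. Consequently, if sup_N E[X₁ᴺ(0)] < ∞, then E[∫₀ᵀ 1_{X₁ᴺ(s) ≥ 1} ds] → 0 as N → ∞, i.e. the first component converges to 0 in L¹(Ω×[0,T]). -/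

import Mathlib

/-!
For `f(x₁,x₂) = x₁` one has `B_N f = λ₁ - N γ₁` (as `γ₁(0,·) = 0`), so along a path the martingale
`M` of the hypothesis gives
`N γ̲ ∫₀ᵀ 1_{X₁ ≥ 1} ≤ N ∫₀ᵀ γ₁(X_s) ds = M_T + X₁(0) - X₁(T) + ∫₀ᵀ λ₁(X_s) ds ≤ M_T + X₁(0) + K T`,
and `E M_T = 0`. The catch is that `N ∫₀ᵗ γ₁(X_s) ds` may be infinite, and then the interval
integral in the hypothesis takes a junk value. Doob's maximal inequality makes `M` almost surely
bounded on the rationals of `[0, T]`, which bounds `N ∫₀ᵗ γ₁(X_s) ds` wherever it is finite; as the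
paths are locally constant to the right, finiteness then propagates from `0` up to `T`.
-/

open MeasureTheory Filter
open scoped ENNReal

/-- The scaled generator `B_N` of the two-dimensional discrete birth-and-death model. -/
noncomputable def BN (lam1 gam1 lam2 gam2 : ℕ × ℕ → ℝ) (N : ℕ)
    (f : ℕ × ℕ → ℝ) (p : ℕ × ℕ) : ℝ :=
  lam1 p * (f (p.1 + 1, p.2) - f p) + (N : ℝ) * gam1 p * (f (p.1 - 1, p.2) - f p)
    + (N : ℝ) * lam2 p * (f (p.1, p.2 + 1) - f p) + gam2 p * (f (p.1, p.2 - 1) - f p)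

open Set Topology

theorem measurable_of_continuousWithinAt_Ici {β : Type*} [TopologicalSpace β]
    [TopologicalSpace.PseudoMetrizableSpace β] [MeasurableSpace β] [BorelSpace β] {x : ℝ → β}
    (hx : ∀ t, ContinuousWithinAt x (Ici t) t) : Measurable x := by
  -- `x` is the pointwise limit of its values on the grid `ℤ / (n + 1)`, sampled from the right
  set r : ℕ → ℝ → ℝ := fun n s => ⌈s * (n + 1)⌉ / (n + 1)
  have hr : ∀ n s, s ≤ r n s ∧ r n s < s + 1 / (n + 1) := by
    intro n s
    have hn : (0 : ℝ) < n + 1 := by positivity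
    constructor
    · rw [le_div_iff₀ hn]; exact Int.le_ceil _
    · rw [div_lt_iff₀ hn, add_mul, one_div_mul_cancel hn.ne']; exact Int.ceil_lt_add_one _
  refine measurable_of_tendsto_metrizable (f := fun n s => x (r n s)) (fun n => ?_) ?_
  · exact (measurable_from_top (f := fun k : ℤ => x (k / (n + 1)))).comp
      (Int.measurable_ceil.comp (measurable_id.mul_const _))
  · refine tendsto_pi_nhds.2 fun s => (hx s).tendsto.comp ?_
    refine tendsto_nhdsWithin_iff.2 ⟨?_, Eventually.of_forall fun n => (hr n s).1⟩
    exact tendsto_of_tendsto_of_tendsto_of_le_of_le tendsto_const_nhds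
      (by simpa using tendsto_one_div_add_atTop_nhds_zero_nat.const_add s)
      (fun n => (hr n s).1) (fun n => (hr n s).2.le)

theorem intervalIntegrable_of_integral_rat_le {f : ℝ → ℝ} (hf0 : ∀ s, 0 ≤ f s)
    (hrc : ∀ t, ∀ᶠ s in 𝓝[≥] t, f s = f t) {T S : ℝ} (hT : 0 ≤ T)
    (hq : ∀ q : ℚ, 0 ≤ (q : ℝ) → (q : ℝ) ≤ T → IntervalIntegrable f volume 0 q →
      ∫ s in (0 : ℝ)..q, f s ≤ S) :
    IntervalIntegrable f volume 0 T := by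
  have hmono : ∀ {a b : ℝ}, 0 ≤ a → a ≤ b → IntervalIntegrable f volume 0 b →
      IntervalIntegrable f volume 0 a := fun ha hab h =>
    h.mono_set (by rw [uIcc_of_le ha, uIcc_of_le (ha.trans hab)]; exact Icc_subset_Icc_right hab)
  set A := {t | t ∈ Icc 0 T ∧ IntervalIntegrable f volume 0 t}
  have hA0 : 0 ∈ A := ⟨⟨le_rfl, hT⟩, .refl⟩
  have hAbdd : BddAbove A := ⟨T, fun t ht => ht.1.2⟩
  set u := sSup A
  have hu0 : 0 ≤ u := le_csSup hAbdd hA0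
  have hbelow : ∀ t ∈ Ico 0 u,
      IntervalIntegrable f volume 0 t ∧ ∫ s in (0 : ℝ)..t, f s ≤ S := by
    rintro t ⟨ht0, htu⟩
    obtain ⟨t', ⟨⟨-, ht'T⟩, ht'⟩, htt'⟩ := exists_lt_of_lt_csSup ⟨0, hA0⟩ htu
    obtain ⟨q, htq, hqt'⟩ := exists_rat_btwn htt'
    have hq_int := hmono (ht0.trans htq.le) hqt'.le ht'
    refine ⟨hmono ht0 htq.le hq_int, le_trans ?_ (hq q (ht0.trans htq.le)
      (hqt'.trans_le ht'T).le hq_int)⟩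
    exact intervalIntegral.integral_mono_interval le_rfl ht0 htq.le
      (ae_of_all _ fun s => hf0 s) hq_int
  -- monotone convergence: the bound `S` below `u` passes to `u` itself
  have huA : IntervalIntegrable f volume 0 u := by
    rcases hu0.eq_or_lt with hu | hu
    · rw [← hu]
    obtain ⟨t, -, ht, hlim⟩ := exists_seq_strictMono_tendsto' hu
    rw [intervalIntegrable_iff_integrableOn_Ioc_of_le hu0]
    have ht_below : ∀ n, t n ∈ Ico 0 u := fun n => ⟨(ht n).1.le, (ht n).2⟩
    refine integrableOn_Ioc_of_intervalIntegral_norm_bounded_right (I := S)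
      (fun n => ?_) hlim (Eventually.of_forall fun n => ?_)
    · exact (intervalIntegrable_iff_integrableOn_Ioc_of_le (ht n).1.le).1
        (hbelow _ (ht_below n)).1
    · rw [← intervalIntegral.integral_of_le (ht n).1.le]
      simpa only [Real.norm_of_nonneg (hf0 _)] using (hbelow _ (ht_below n)).2
  -- `f` is constant just to the right of `u`, so integrability extends past `u` unless `u = T`
  have huT : u = T := by
    refine le_antisymm (csSup_le ⟨0, hA0⟩ fun t ht => ht.1.2) (not_lt.1 fun huT => ?_)
    obtain ⟨w, hw, hconst⟩ := mem_nhdsGE_iff_exists_Ico_subset.1 (hrc u)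
    set v := min ((u + w) / 2) T
    have huv : u < v := lt_min (by linarith [mem_Ioi.1 hw]) huT
    have hvw : v < w := (min_le_left _ _).trans_lt (by linarith [mem_Ioi.1 hw])
    have hv : v ∈ A := by
      refine ⟨⟨hu0.trans huv.le, min_le_right _ _⟩, huA.trans ?_⟩
      refine (intervalIntegrable_const (c := f u)).congr_uIoo fun s hs => ?_
      rw [uIoo_of_le huv.le] at hs
      exact (hconst ⟨hs.1.le, hs.2.trans hvw⟩).symm
    exact (le_csSup hAbdd hv).not_gt huv
  exact huT ▸ huA

section Doob

variable {Ω ι κ : Type*} {m0 : MeasurableSpace Ω} {μ : Measure Ω} [IsFiniteMeasure μ]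
  [LinearOrder ι] {ℱ : Filtration ι m0} {H : Ω → ℝ}

/-- Doob's maximal inequality for the martingale `t ↦ μ[H | ℱ t]`, sampled at finitely many
times `τ k` that need not be distinct or ordered. -/
theorem mul_measureReal_biUnion_le_setIntegral_condExp (hH : Integrable H μ) (τ : κ → ι)
    (c : ℝ) (F : Finset κ) :
    c * μ.real (⋃ k ∈ F, {ω | c ≤ μ[H | ℱ (τ k)] ω})
      ≤ ∫ ω in ⋃ k ∈ F, {ω | c ≤ μ[H | ℱ (τ k)] ω}, H ω ∂μ := by
  classical
  set V : κ → Set Ω := fun k => {ω | c ≤ μ[H | ℱ (τ k)] ω}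
  have hV : ∀ k, MeasurableSet[ℱ (τ k)] (V k) := fun k =>
    measurableSet_le measurable_const stronglyMeasurable_condExp.measurable
  induction F using Finset.induction_on_max_value τ with
  | empty => simp
  | insert a F haF hmax ih =>
    set U := ⋃ k ∈ F, V k
    have hUa : MeasurableSet[ℱ (τ a)] U :=
      Finset.measurableSet_biUnion _ fun k hk => ℱ.mono (hmax k hk) _ (hV k)
    have hnew : MeasurableSet[ℱ (τ a)] (V a \ U) := (hV a).diff hUa
    have hsplit : ⋃ k ∈ insert a F, V k = U ∪ (V a \ U) := by
      rw [Finset.set_biUnion_insert, union_sdiff_self, union_comm]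
    have hdisj : Disjoint U (V a \ U) := disjoint_sdiff_right
    have hstep : c * μ.real (V a \ U) ≤ ∫ ω in V a \ U, H ω ∂μ := by
      rw [← setIntegral_condExp (ℱ.le (τ a)) hH hnew]
      exact setIntegral_ge_of_const_le_real (ℱ.le _ _ hnew) (measure_ne_top _ _)
        (fun ω hω => hω.1) integrable_condExp.integrableOn
    rw [hsplit, measureReal_union hdisj (ℱ.le _ _ hnew) (measure_ne_top _ _) (measure_ne_top _ _),
      setIntegral_union hdisj (ℱ.le _ _ hnew) hH.integrableOn hH.integrableOn, mul_add]
    exact add_le_add ih hstep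

theorem ae_bddAbove_condExp [Countable κ] (hH : Integrable H μ) (τ : κ → ι) :
    ∀ᵐ ω ∂μ, BddAbove (range fun k => μ[H | ℱ (τ k)] ω) := by
  classical
  set V : ℕ → κ → Set Ω := fun m k => {ω | (m : ℝ) ≤ μ[H | ℱ (τ k)] ω}
  have hV : ∀ m k, MeasurableSet (V m k) := fun m k =>
    ℱ.le _ _ (measurableSet_le measurable_const stronglyMeasurable_condExp.measurable)
  have hbound : ∀ m : ℕ, 0 < m → μ (⋃ k, V m k) ≤ ENNReal.ofReal ((∫ ω, |H ω| ∂μ) / m) := by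
    intro m hm
    rw [iUnion_eq_iUnion_finset,
      Directed.measure_iUnion (s := fun F : Finset κ => ⋃ k ∈ F, V m k)
        (Monotone.directed_le fun F G hFG => biUnion_subset_biUnion_left hFG)]
    refine iSup_le fun F => ?_
    rw [← ofReal_measureReal (measure_ne_top _ _)]
    refine ENNReal.ofReal_le_ofReal ((le_div_iff₀' (by positivity)).2 ?_)
    calc (m : ℝ) * μ.real (⋃ k ∈ F, V m k) ≤ ∫ ω in ⋃ k ∈ F, V m k, H ω ∂μ :=
          mul_measureReal_biUnion_le_setIntegral_condExp hH τ m F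
      _ ≤ ∫ ω in ⋃ k ∈ F, V m k, |H ω| ∂μ :=
          setIntegral_mono hH.integrableOn hH.abs.integrableOn fun ω => le_abs_self _
      _ ≤ ∫ ω, |H ω| ∂μ :=
          setIntegral_le_integral hH.abs (ae_of_all _ fun ω => abs_nonneg _)
  have hsub : ∀ m, {ω | ¬BddAbove (range fun k => μ[H | ℱ (τ k)] ω)} ⊆ ⋃ k, V m k := by
    intro m ω hω
    simp only [mem_ofPred_eq, not_bddAbove_iff, mem_range, exists_exists_eq_and] at hω
    obtain ⟨k, hk⟩ := hω m
    exact mem_iUnion.2 ⟨k, hk.le⟩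
  rw [ae_iff]
  refine le_antisymm (ge_of_tendsto ?_ ((eventually_gt_atTop 0).mono fun m hm =>
    (measure_mono (hsub m)).trans (hbound m hm))) zero_le
  simpa using (ENNReal.tendsto_ofReal (tendsto_const_div_atTop_nhds_zero_nat _))

theorem MeasureTheory.Martingale.ae_bddAbove_range [Countable κ] {M : ι → Ω → ℝ}
    (hM : Martingale M ℱ μ) {τ : κ → ι} {T : ι} (hτ : ∀ k, τ k ≤ T) :
    ∀ᵐ ω ∂μ, BddAbove (range fun k => M (τ k) ω) := by
  have hle : ∀ᵐ ω ∂μ, ∀ k, M (τ k) ω ≤ μ[fun ω => |M T ω| | ℱ (τ k)] ω :=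
    ae_all_iff.2 fun k => (hM.condExp_ae_eq (hτ k)).symm.trans_le <|
      condExp_mono (hM.integrable T) (hM.integrable T).abs (ae_of_all _ fun ω => le_abs_self _)
  filter_upwards [hle, ae_bddAbove_condExp (ℱ := ℱ) (hM.integrable T).abs τ]
    with ω hle ⟨C, hC⟩
  exact ⟨C, forall_mem_range.2 fun k => (hle k).trans (hC (mem_range_self k))⟩

end Doob

theorem intervalIntegrable_comp_of_abs_le {β : Type*} [MeasurableSpace β]
    [DiscreteMeasurableSpace β] {x : ℝ → β} (hx : Measurable x) {φ : β → ℝ} {C : ℝ}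
    (hφ : ∀ p, |φ p| ≤ C) (a b : ℝ) : IntervalIntegrable (fun s => φ (x s)) volume a b :=
  (intervalIntegrable_const (c := C)).mono_fun'
    (Measurable.of_discrete.comp hx).aestronglyMeasurable (ae_of_all _ fun s => hφ (x s))

section Model

variable (lam1 gam1 lam2 gam2 : ℕ × ℕ → ℝ) (N : ℕ)

theorem BN_fst_eq (hgam10 : ∀ x2 : ℕ, gam1 (0, x2) = 0) (p : ℕ × ℕ) :
    BN lam1 gam1 lam2 gam2 N (fun p => (p.1 : ℝ)) p = lam1 p - N * gam1 p := by
  obtain ⟨x1, x2⟩ := p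
  rcases Nat.eq_zero_or_pos x1 with rfl | hx1
  · simp [BN, hgam10]
  · simp only [BN, Nat.cast_pred hx1]
    push_cast
    ring

noncomputable def compensatedFst (x : ℝ → ℕ × ℕ) (t : ℝ) : ℝ :=
  (x t).1 - (x 0).1 - ∫ s in (0 : ℝ)..t, BN lam1 gam1 lam2 gam2 N (fun p => (p.1 : ℝ)) (x s)

noncomputable def busyTime (x : ℝ → ℕ × ℕ) (T : ℝ) : ℝ :=
  ∫ s in (0 : ℝ)..T, if 1 ≤ (x s).1 then (1 : ℝ) else 0

theorem busyTime_nonneg (x : ℝ → ℕ × ℕ) {T : ℝ} (hT : 0 ≤ T) : 0 ≤ busyTime x T :=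
  intervalIntegral.integral_nonneg hT fun s _ => by split_ifs <;> norm_num

variable {lam1 gam1 lam2 gam2 N}

theorem mul_busyTime_le (hlam1 : ∀ p, 0 ≤ lam1 p) (hgam1 : ∀ p, 0 ≤ gam1 p)
    (hgam10 : ∀ x2 : ℕ, gam1 (0, x2) = 0) {K : ℝ} (hlam1K : ∀ p, lam1 p ≤ K) {Γ : ℝ}
    (hΓ : ∀ p : ℕ × ℕ, 1 ≤ p.1 → Γ ≤ gam1 p) {x : ℝ → ℕ × ℕ}
    (hx : ∀ t, ContinuousWithinAt x (Ici t) t) {T C : ℝ} (hT : 0 ≤ T)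
    (hC : ∀ q : ℚ, 0 ≤ (q : ℝ) → (q : ℝ) ≤ T → compensatedFst lam1 gam1 lam2 gam2 N x q ≤ C) :
    N * Γ * busyTime x T ≤ compensatedFst lam1 gam1 lam2 gam2 N x T + (x 0).1 + K * T := by
  have hxm := measurable_of_continuousWithinAt_Ici hx
  set f := fun s => N * gam1 (x s)
  have hf0 : ∀ s, 0 ≤ f s := fun s => mul_nonneg N.cast_nonneg (hgam1 _)
  have hl : ∀ t, IntervalIntegrable (fun s => lam1 (x s)) volume 0 t :=
    intervalIntegrable_comp_of_abs_le hxm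
      (fun p => abs_le.2 ⟨by linarith [hlam1 p, hlam1K p], hlam1K p⟩) 0
  have hlK : ∀ t, 0 ≤ t → t ≤ T → ∫ s in (0 : ℝ)..t, lam1 (x s) ≤ K * T := by
    intro t ht0 htT
    calc ∫ s in (0 : ℝ)..t, lam1 (x s) ≤ ∫ s in (0 : ℝ)..t, K :=
          intervalIntegral.integral_mono_on ht0 (hl t) intervalIntegrable_const
            fun s _ => hlam1K _
      _ ≤ K * T := by
          rw [intervalIntegral.integral_const, smul_eq_mul, sub_zero, mul_comm]
          exact mul_le_mul_of_nonneg_left htT (le_trans (hlam1 (0, 0)) (hlam1K _))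
  have hf_le : ∀ t, 0 ≤ t → t ≤ T → IntervalIntegrable f volume 0 t →
      ∫ s in (0 : ℝ)..t, f s ≤ compensatedFst lam1 gam1 lam2 gam2 N x t + (x 0).1 + K * T := by
    intro t ht0 htT hft
    have hBN : ∫ s in (0 : ℝ)..t, BN lam1 gam1 lam2 gam2 N (fun p => (p.1 : ℝ)) (x s)
        = (∫ s in (0 : ℝ)..t, lam1 (x s)) - ∫ s in (0 : ℝ)..t, f s := by
      simp only [BN_fst_eq lam1 gam1 lam2 gam2 N hgam10]
      exact intervalIntegral.integral_sub (hl t) hft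
    have := hlK t ht0 htT
    have : (0 : ℝ) ≤ (x t).1 := Nat.cast_nonneg _
    simp only [compensatedFst, hBN]
    linarith
  have hfT : IntervalIntegrable f volume 0 T :=
    intervalIntegrable_of_integral_rat_le (S := C + (x 0).1 + K * T) hf0
      (fun t => Eventually.mono ((hx t).tendsto (isOpen_discrete {x t} |>.mem_nhds rfl))
        fun s hs => by simp only [f, mem_singleton_iff.1 hs])
      hT fun q hq0 hqT hq => (hf_le q hq0 hqT hq).trans (by linarith [hC q hq0 hqT])
  calc N * Γ * busyTime x T
      = ∫ s in (0 : ℝ)..T, N * Γ * (if 1 ≤ (x s).1 then (1 : ℝ) else 0) :=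
        (intervalIntegral.integral_const_mul _ _).symm
    _ ≤ ∫ s in (0 : ℝ)..T, f s := by
        refine intervalIntegral.integral_mono_on hT ?_ hfT fun s _ => ?_
        · refine intervalIntegrable_comp_of_abs_le hxm
            (φ := fun p => N * Γ * if 1 ≤ p.1 then (1 : ℝ) else 0) (C := |N * Γ|)
            (fun p => by split_ifs <;> simp; positivity) 0 T
        · split_ifs with h
          · simpa using mul_le_mul_of_nonneg_left (hΓ _ h) N.cast_nonneg
          · simpa using hf0 s
    _ ≤ _ := hf_le T hT le_rfl hfT

theorem mul_integral_busyTime_le {Ω : Type*} {m0 : MeasurableSpace Ω} {μ : Measure Ω}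
    [IsProbabilityMeasure μ] {ℱ : Filtration ℝ m0} (hlam1 : ∀ p, 0 ≤ lam1 p)
    (hgam1 : ∀ p, 0 ≤ gam1 p) (hgam10 : ∀ x2 : ℕ, gam1 (0, x2) = 0) {K : ℝ} (hK : 0 ≤ K)
    (hlam1K : ∀ p, lam1 p ≤ K) {Γ : ℝ} (hΓ : ∀ p : ℕ × ℕ, 1 ≤ p.1 → Γ ≤ gam1 p)
    {X : ℝ → Ω → ℕ × ℕ} (hX : ∀ ω t, ContinuousWithinAt (fun s => X s ω) (Ici t) t)
    (hmart : Martingale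
      (fun t ω => compensatedFst lam1 gam1 lam2 gam2 N (fun s => X s ω) t) ℱ μ)
    (h0int : Integrable (fun ω => ((X 0 ω).1 : ℝ)) μ) {T : ℝ} (hT : 0 ≤ T) :
    N * Γ * ∫ ω, busyTime (fun s => X s ω) T ∂μ ≤ ∫ ω, ((X 0 ω).1 : ℝ) ∂μ + K * T := by
  set M := fun t ω => compensatedFst lam1 gam1 lam2 gam2 N (fun s => X s ω) t
  by_cases hint : Integrable (fun ω => busyTime (fun s => X s ω) T) μ
  swap
  · rw [integral_undef hint, mul_zero]
    exact add_nonneg (integral_nonneg fun ω => Nat.cast_nonneg _) (mul_nonneg hK hT)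
  have hbdd := hmart.ae_bddAbove_range (τ := fun q : {q : ℚ // (q : ℝ) ≤ T} => (q : ℝ))
    fun q => q.2
  have hpath : ∀ᵐ ω ∂μ, N * Γ * busyTime (fun s => X s ω) T ≤ M T ω + (X 0 ω).1 + K * T := by
    filter_upwards [hbdd] with ω ⟨C, hC⟩
    exact mul_busyTime_le hlam1 hgam1 hgam10 hlam1K hΓ (hX ω) hT
      fun q _ hqT => hC ⟨⟨q, hqT⟩, rfl⟩
  have hM0 : ∫ ω, M 0 ω ∂μ = 0 := by simp [M, compensatedFst]
  have hMT : ∫ ω, M T ω ∂μ = 0 :=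
    (integral_condExp (ℱ.le 0)).symm.trans (integral_congr_ae (hmart.condExp_ae_eq hT))
      |>.trans hM0
  have hMX : Integrable (fun ω => M T ω + ((X 0 ω).1 : ℝ)) μ := (hmart.integrable T).add h0int
  calc N * Γ * ∫ ω, busyTime (fun s => X s ω) T ∂μ
      = ∫ ω, N * Γ * busyTime (fun s => X s ω) T ∂μ := (integral_const_mul _ _).symm
    _ ≤ ∫ ω, (M T ω + (X 0 ω).1 + K * T) ∂μ :=
        integral_mono_ae (hint.const_mul _) (hMX.add (integrable_const _)) hpath
    _ = ∫ ω, ((X 0 ω).1 : ℝ) ∂μ + K * T := by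
        rw [integral_add hMX (integrable_const _), integral_add (hmart.integrable T) h0int, hMT,
          integral_const]
        simp

end Model

theorem stmt_2_general
    {Ω : Type*} {m0 : MeasurableSpace Ω} {μ : Measure Ω} [IsProbabilityMeasure μ]
    (ℱ : Filtration ℝ m0)
    (lam1 gam1 lam2 gam2 : ℕ × ℕ → ℝ)
    (hlam1 : ∀ p, 0 ≤ lam1 p) (hgam1 : ∀ p, 0 ≤ gam1 p)
    (hgam10 : ∀ x2 : ℕ, gam1 (0, x2) = 0)
    (hinf : 0 < sInf (gam1 '' {p : ℕ × ℕ | 1 ≤ p.1}))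
    (K : ℝ) (hK : 0 ≤ K) (hlam1bd : ∀ p, lam1 p ≤ K)
    (X : ℕ → ℝ → Ω → ℕ × ℕ)
    (hcadlag : ∀ N ω t, ContinuousWithinAt (fun s => X N s ω) (Set.Ici t) t)
    (hmart : ∀ N, 1 ≤ N → Martingale
      (fun t ω => ((X N t ω).1 : ℝ) - ((X N 0 ω).1 : ℝ)
        - ∫ s in (0:ℝ)..t,
            BN lam1 gam1 lam2 gam2 N (fun p => (p.1 : ℝ)) (X N s ω)) ℱ μ)
    (h0int : ∀ N, Integrable (fun ω => ((X N 0 ω).1 : ℝ)) μ)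
    (T : ℝ) (hT : 0 < T) :
    (∀ N : ℕ, 1 ≤ N →
      (N : ℝ) * (∫ ω, (∫ s in (0:ℝ)..T, if 1 ≤ (X N s ω).1 then (1:ℝ) else 0) ∂μ)
        ≤ ((∫ ω, ((X N 0 ω).1 : ℝ) ∂μ) + K * T) / sInf (gam1 '' {p : ℕ × ℕ | 1 ≤ p.1})) ∧
    ((∃ C : ℝ, ∀ N, (∫ ω, ((X N 0 ω).1 : ℝ) ∂μ) ≤ C) →
      Tendsto
        (fun N : ℕ => ∫ ω, (∫ s in (0:ℝ)..T, if 1 ≤ (X N s ω).1 then (1:ℝ) else 0) ∂μ)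
        atTop (nhds 0)) := by
  set Γ := sInf (gam1 '' {p : ℕ × ℕ | 1 ≤ p.1})
  have hΓ : ∀ p : ℕ × ℕ, 1 ≤ p.1 → Γ ≤ gam1 p := fun p hp =>
    csInf_le ⟨0, forall_mem_image.2 fun q _ => hgam1 q⟩ ⟨p, hp, rfl⟩
  have hbound : ∀ N : ℕ, 1 ≤ N →
      (N : ℝ) * (∫ ω, busyTime (fun s => X N s ω) T ∂μ)
        ≤ ((∫ ω, ((X N 0 ω).1 : ℝ) ∂μ) + K * T) / Γ := fun N hN => by
    rw [le_div_iff₀ hinf, mul_right_comm]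
    exact mul_integral_busyTime_le hlam1 hgam1 hgam10 hK hlam1bd hΓ (hcadlag N) (hmart N hN)
      (h0int N) hT.le
  refine ⟨hbound, fun ⟨C, hC⟩ => ?_⟩
  refine tendsto_of_tendsto_of_tendsto_of_le_of_le' tendsto_const_nhds
    (tendsto_const_div_atTop_nhds_zero_nat ((C + K * T) / Γ))
    (Eventually.of_forall fun N => integral_nonneg fun ω => busyTime_nonneg _ hT.le)
    ((eventually_ge_atTop 1).mono fun N hN => ?_)
  rw [le_div_iff₀' (by exact_mod_cast hN)]
  exact (hbound N hN).trans (div_le_div_of_nonneg_right (by linarith [hC N]) hinf.le)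

/-- Assume `γ̲ := inf{γ₁(x₁,x₂) : x₁ ≥ 1} > 0` and `λ₁ ≤ K`. If for every
`N ≥ 1` the process `(X₁ᴺ, X₂ᴺ)` satisfies the martingale property for `B_N` with
`f(x₁,x₂) = x₁` and integrable initial first component, then for every `T > 0`:
`N · E[∫₀ᵀ 1_{X₁ᴺ(s) ≥ 1} ds] ≤ (E[X₁ᴺ(0)] + K T)/γ̲`; consequently, if the initial means
are bounded uniformly in `N`, then `E[∫₀ᵀ 1_{X₁ᴺ(s) ≥ 1} ds] → 0` as `N → ∞`. -/
theorem stmt_2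
    {Ω : Type*} {m0 : MeasurableSpace Ω} {μ : Measure Ω} [IsProbabilityMeasure μ]
    (ℱ : Filtration ℝ m0)
    (lam1 gam1 lam2 gam2 : ℕ × ℕ → ℝ)
    (hlam1 : ∀ p, 0 ≤ lam1 p) (hgam1 : ∀ p, 0 ≤ gam1 p)
    (hlam2 : ∀ p, 0 ≤ lam2 p) (hgam2 : ∀ p, 0 ≤ gam2 p)
    (hgam10 : ∀ x2 : ℕ, gam1 (0, x2) = 0) (hgam20 : ∀ x1 : ℕ, gam2 (x1, 0) = 0)
    (hinf : 0 < sInf (gam1 '' {p : ℕ × ℕ | 1 ≤ p.1}))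
    (K : ℝ) (hK : 0 ≤ K) (hlam1bd : ∀ p, lam1 p ≤ K)
    (X : ℕ → ℝ → Ω → ℕ × ℕ)
    (hadapt : ∀ N, Adapted ℱ (X N))
    (hcadlag : ∀ N ω t, ContinuousWithinAt (fun s => X N s ω) (Set.Ici t) t)
    (hmart : ∀ N, 1 ≤ N → Martingale
      (fun t ω => ((X N t ω).1 : ℝ) - ((X N 0 ω).1 : ℝ)
        - ∫ s in (0:ℝ)..t,
            BN lam1 gam1 lam2 gam2 N (fun p => (p.1 : ℝ)) (X N s ω)) ℱ μ)
    (h0int : ∀ N, Integrable (fun ω => ((X N 0 ω).1 : ℝ)) μ)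
    (T : ℝ) (hT : 0 < T) :
    (∀ N : ℕ, 1 ≤ N →
      (N : ℝ) * (∫ ω, (∫ s in (0:ℝ)..T, if 1 ≤ (X N s ω).1 then (1:ℝ) else 0) ∂μ)
        ≤ ((∫ ω, ((X N 0 ω).1 : ℝ) ∂μ) + K * T) / sInf (gam1 '' {p : ℕ × ℕ | 1 ≤ p.1})) ∧
    ((∃ C : ℝ, ∀ N, (∫ ω, ((X N 0 ω).1 : ℝ) ∂μ) ≤ C) →
      Tendsto
        (fun N : ℕ => ∫ ω, (∫ s in (0:ℝ)..T, if 1 ≤ (X N s ω).1 then (1:ℝ) else 0) ∂μ)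
        atTop (nhds 0)) :=
  stmt_2_general ℱ lam1 gam1 lam2 gam2 hlam1 hgam1 hgam10 hinf K hK hlam1bd X hcadlag hmart h0int T
    hT
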